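/- arXiv:1607.01006 — 2 statements merged into one kernel-verified Lean document; each statement's English description precedes it below -/
import Mathlib

section
/- For every nonnegative integer m, ∑_{k=0}^{2m+1} (-2)^k C(2m+1,k) H_k = H_m - 2H_{2m+1}, where H_j is the j-th harmonic number. -/
open Finset

/-!
Write `S_x(n) = ∑_k C(n,k) x^k H_k`. Pascal's rule together with `H_{k+1} = H_k + 1/(k+1)` gives
`S_x(n+1) = (1+x) S_x(n) + ((1+x)^{n+1} - 1)/(n+1)`, the correction term being
`∑_k C(n,k) x^{k+1}/(k+1) = ∫_0^x (1+t)^n dt`. At `x = -2` two steps of this recurrence give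
`S(2m+3) = S(2m+1) - 2/(2m+3)`, which is exactly the increment of `H_m - 2 H_{2m+1}`.
-/

noncomputable def H (n : ℕ) : ℝ := ∑ i ∈ Finset.range n, (1:ℝ)/(i+1)

theorem H_zero : H 0 = 0 := by
  simp [H]

theorem H_succ (n : ℕ) : H (n + 1) = H n + 1 / (n + 1) := by
  simp [H, sum_range_succ]

theorem sum_choose_mul_pow_succ_div (x : ℝ) (n : ℕ) :
    ∑ k ∈ range (n + 1), (n.choose k : ℝ) * x ^ (k + 1) / (k + 1)
      = ((1 + x) ^ (n + 1) - 1) / (n + 1) := by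
  have absorb (k : ℕ) : (n.choose k : ℝ) * x ^ (k + 1) / (k + 1)
      = ((n + 1).choose (k + 1) : ℝ) * x ^ (k + 1) / (n + 1) := by
    have h : ((n : ℝ) + 1) * n.choose k = (n + 1).choose (k + 1) * ((k : ℝ) + 1) := by
      exact_mod_cast Nat.add_one_mul_choose_eq n k
    field_simp
    linear_combination x ^ (k + 1) * h
  have binomial : ∑ k ∈ range (n + 1), ((n + 1).choose (k + 1) : ℝ) * x ^ (k + 1)
      = (1 + x) ^ (n + 1) - 1 := by
    rw [add_comm 1 x, add_pow, sum_range_succ' _ (n + 1)]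
    simp only [one_pow, mul_one, pow_zero, Nat.choose_zero_right, Nat.cast_one,
      add_sub_cancel_right]
    exact sum_congr rfl fun k _ => mul_comm _ _
  simp_rw [absorb, ← sum_div, binomial]

noncomputable def binomialHarmonicSum (x : ℝ) (n : ℕ) : ℝ :=
  ∑ k ∈ range (n + 1), x ^ k * (n.choose k : ℝ) * H k

theorem binomialHarmonicSum_succ (x : ℝ) (n : ℕ) :
    binomialHarmonicSum x (n + 1)
      = (1 + x) * binomialHarmonicSum x n + ((1 + x) ^ (n + 1) - 1) / (n + 1) := by
  have shifted : ∑ k ∈ range (n + 1), x ^ (k + 1) * (n.choose (k + 1) : ℝ) * H (k + 1)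
      = binomialHarmonicSum x n := by
    have h := sum_range_succ' (fun k => x ^ k * (n.choose k : ℝ) * H k) (n + 1)
    rw [sum_range_succ] at h
    simp only [Nat.choose_succ_self, Nat.cast_zero, mul_zero, zero_mul, add_zero, H_zero] at h
    exact h.symm
  have pascal (k : ℕ) : x ^ (k + 1) * ((n + 1).choose (k + 1) : ℝ) * H (k + 1)
      = x * (x ^ k * (n.choose k : ℝ) * H k) + (n.choose k : ℝ) * x ^ (k + 1) / (k + 1)
        + x ^ (k + 1) * (n.choose (k + 1) : ℝ) * H (k + 1) := by
    rw [Nat.choose_succ_succ', Nat.cast_add, H_succ k]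
    ring
  rw [binomialHarmonicSum, sum_range_succ']
  simp only [pascal, sum_add_distrib, ← mul_sum, shifted, sum_choose_mul_pow_succ_div, H_zero,
    mul_zero, add_zero]
  rw [binomialHarmonicSum]
  ring

theorem binomialHarmonicSum_neg_two_odd_succ (m : ℕ) :
    binomialHarmonicSum (-2) (2 * m + 1 + 2)
      = binomialHarmonicSum (-2) (2 * m + 1) - 2 / (2 * m + 3) := by
  rw [binomialHarmonicSum_succ, binomialHarmonicSum_succ]
  have even_exp : (-1 : ℝ) ^ (2 * m + 1 + 1) = 1 := Even.neg_one_pow ⟨m + 1, by ring⟩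
  have odd_exp : (-1 : ℝ) ^ (2 * m + 1 + 1 + 1) = -1 := Odd.neg_one_pow ⟨m + 1, by ring⟩
  norm_num [even_exp, odd_exp]
  ring

theorem stmt1 (m : ℕ) :
    ∑ k ∈ Finset.range (2*m+2), (-2:ℝ)^k * ((2*m+1).choose k : ℝ) * H k
      = H m - 2 * H (2*m+1) := by
  change binomialHarmonicSum (-2) (2 * m + 1) = _
  induction m with
  | zero => norm_num [binomialHarmonicSum, sum_range_succ, H]
  | succ m ih =>
    rw [show 2 * (m + 1) + 1 = 2 * m + 1 + 2 by ring, binomialHarmonicSum_neg_two_odd_succ, ih,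
      H_succ m, show 2 * m + 1 + 2 = 2 * m + 1 + 1 + 1 by ring, H_succ (2 * m + 1 + 1),
      H_succ (2 * m + 1)]
    push_cast
    field_simp
    ring
end

section
/- For every nonnegative integer n and complex x avoiding poles, ∑_{k=0}^{n} C(2n-k, n) · C(x+k, k) · H_k(x) = C(x+2n+1, n) · ( H_{2n+1}(x) - H_{n+1}(x) ), where H_j(x) = ∑_{i=1}^j 1/(x+i). -/
/-!
The left side is the derivative in `x` of `∑ₖ C(2n-k, n) C(x+k, k)`, since
`d/dx C(x+k, k) = C(x+k, k) H_k(x)` (logarithmic derivative of `(x+1)⋯(x+k)`). By Chu–Vandermonde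
at negative upper indices that sum equals `C(x+2n+1, n)`, whose logarithmic derivative is
`∑_{i=n+2}^{2n+1} 1/(x+i) = H_{2n+1}(x) - H_{n+1}(x)`.
-/

open Finset

noncomputable def Hx (x : ℝ) (n : ℕ) : ℝ := ∑ i ∈ Finset.range n, 1/(x+(i:ℝ)+1)
noncomputable def gch (y : ℝ) (s : ℕ) : ℝ := (∏ i ∈ Finset.range s, (y - (i:ℝ))) / (Nat.factorial s)

theorem hasDerivAt_prod_add {𝕜 ι : Type*} [NontriviallyNormedField 𝕜] (s : Finset ι) (a : ι → 𝕜)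
    {x : 𝕜} (h : ∀ i ∈ s, x + a i ≠ 0) :
    HasDerivAt (fun y => ∏ i ∈ s, (y + a i)) ((∏ i ∈ s, (x + a i)) * ∑ i ∈ s, (x + a i)⁻¹) x := by
  classical
  refine (HasDerivAt.fun_finsetProd fun i (_ : i ∈ s) =>
    (hasDerivAt_id x).add_const (a i)).congr_deriv ?_
  rw [mul_sum]
  refine sum_congr rfl fun i hi => ?_
  rw [← prod_erase_mul s _ hi, id, smul_eq_mul, mul_one, mul_inv_cancel_right₀ (h i hi)]

section BinomialRing

variable {R : Type*} [CommRing R] [BinomialRing R]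

theorem Ring.choose_neg_add_one (r : R) (k : ℕ) :
    Ring.choose (-(r + 1)) k = (-1) ^ k * Ring.choose (r + k) k := by
  rw [Ring.choose_neg, add_right_comm, add_sub_cancel_right, Units.smul_def, zsmul_eq_mul,
    Int.coe_negOnePow_natCast, Int.cast_pow, Int.cast_neg, Int.cast_one]

/-- Chu–Vandermonde for the upper indices `-(r+1)` and `-(p+1)`. -/
theorem sum_choose_mul_choose_add (r : R) (p q : ℕ) :
    ∑ k ∈ range (q + 1), ((p + q - k).choose p : R) * Ring.choose (r + k) k =
      Ring.choose (r + p + q + 1) q := by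
  have h := Ring.add_choose_eq q (Commute.all (-(r + 1)) (-((p : R) + 1)))
  rw [show -(r + 1) + -((p : R) + 1) = -((r + p + 1) + 1) by ring,
    Nat.sum_antidiagonal_eq_sum_range_succ_mk] at h
  simp only [Ring.choose_neg_add_one, ← Nat.cast_add, Ring.choose_natCast] at h
  have hterm : ∀ k ∈ range (q + 1), (-1) ^ k * Ring.choose (r + k) k *
      ((-1) ^ (q - k) * ((p + (q - k)).choose (q - k) : R)) =
      (-1) ^ q * (((p + q - k).choose p : R) * Ring.choose (r + k) k) := by
    intro k hk
    have hkq : k ≤ q := Nat.lt_succ_iff.mp (mem_range.mp hk)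
    rw [← Nat.choose_symm_add, ← Nat.add_sub_assoc hkq,
      show (-1 : R) ^ q = (-1) ^ k * (-1) ^ (q - k) by rw [← pow_add, Nat.add_sub_cancel' hkq]]
    ring
  rw [sum_congr rfl hterm, ← mul_sum, add_right_comm _ (1 : R)] at h
  exact ((isUnit_one.neg.pow q).mul_left_cancel h).symm

end BinomialRing

theorem gch_eq_choose (y : ℝ) (s : ℕ) : gch y s = Ring.choose y s := by
  rw [gch, Ring.choose_eq_smul, smul_eq_mul, ← Polynomial.aeval_eq_smeval, Polynomial.aeval_def,
    ← Polynomial.eval_map, descPochhammer_map, descPochhammer_eval_eq_prod_range, inv_mul_eq_div]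

theorem hasDerivAt_gch_add (c : ℝ) (k : ℕ) {x : ℝ} (h : ∀ i < k, x + c - i ≠ 0) :
    HasDerivAt (fun y => gch (y + c) k) (gch (x + c) k * ∑ i ∈ range k, (x + c - i)⁻¹) x := by
  have := (hasDerivAt_prod_add (range k) (fun i : ℕ => c - i)
    fun i hi => add_sub_assoc x c i ▸ h i (mem_range.mp hi)).div_const (k.factorial : ℝ)
  simp only [← add_sub_assoc] at this
  exact this.congr_deriv (div_mul_eq_mul_div ..).symm

theorem Hx_add_sub (x : ℝ) (m k : ℕ) :
    Hx x (m + k) - Hx x m = ∑ i ∈ range k, (x + (m + k : ℕ) - i)⁻¹ := by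
  rw [Hx, Hx, sum_range_add, add_sub_cancel_left, ← sum_range_reflect]
  refine sum_congr rfl fun i hi => ?_
  have hik := mem_range.mp hi
  rw [one_div, show m + (k - 1 - i) = m + k - (i + 1) by omega, Nat.cast_sub (by omega)]
  push_cast
  ring

theorem hasDerivAt_gch_add_natCast (m k : ℕ) {x : ℝ}
    (hx : ∀ i : ℕ, m < i → i ≤ m + k → x + i ≠ 0) :
    HasDerivAt (fun y => gch (y + (m + k : ℕ)) k)
      (gch (x + (m + k : ℕ)) k * (Hx x (m + k) - Hx x m)) x := by
  rw [Hx_add_sub]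
  refine hasDerivAt_gch_add _ k fun i hi => ?_
  have := hx (m + k - i) (by omega) (by omega)
  rwa [Nat.cast_sub (by omega), ← add_sub_assoc] at this

theorem stmt14 (x : ℝ) (hx : ∀ i : ℕ, 1 ≤ i → x + (i:ℝ) ≠ 0) (n : ℕ) :
    ∑ k ∈ Finset.range (n+1), (((2*n-k).choose n : ℕ) : ℝ) * gch (x+(k:ℝ)) k * Hx x k
      = gch (x+2*(n:ℝ)+1) n * (Hx x (2*n+1) - Hx x (n+1)) := by
  have hsum : (fun y => ∑ k ∈ range (n + 1), (((2 * n - k).choose n : ℕ) : ℝ) * gch (y + k) k) =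
      fun y => gch (y + 2 * n + 1) n := by
    funext y
    simp only [gch_eq_choose, two_mul, ← add_assoc]
    exact sum_choose_mul_choose_add y n n
  have hL : HasDerivAt
      (fun y => ∑ k ∈ range (n + 1), (((2 * n - k).choose n : ℕ) : ℝ) * gch (y + k) k)
      (∑ k ∈ range (n + 1), (((2 * n - k).choose n : ℕ) : ℝ) * gch (x + k) k * Hx x k) x := by
    refine HasDerivAt.fun_sum fun k _ => ?_
    have := hasDerivAt_gch_add_natCast 0 k fun i hi _ => hx i hi
    rw [zero_add, show Hx x 0 = 0 from sum_range_zero _, sub_zero] at this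
    simpa only [mul_assoc] using this.const_mul _
  have hR := hasDerivAt_gch_add_natCast (n + 1) n fun i hi _ => hx i (by omega)
  rw [show n + 1 + n = 2 * n + 1 by omega] at hR
  push_cast [← add_assoc] at hR
  rw [hsum] at hL
  exact hL.unique hR
end
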